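/- For every graph G, every graph F with minimum degree at least 1, and |V(G)| ≥ |V(F)|, the weak saturation number satisfies wsat(G,F) ≥ min{ |E(G)|, |E(F)| - 1 + (1/2)·min{δ(G), δ(F)-1}·(|V(G)| - |V(F)|) }. -/

import Mathlib

open SimpleGraph Finset Filter

/-- `F` has a copy (an injective graph homomorphism image) in `G`. -/
def HasCopy {W V : Type*} (F : SimpleGraph W) (G : SimpleGraph V) : Prop :=
  ∃ f : W ↪ V, ∀ a b, F.Adj a b → G.Adj (f a) (f b)

/-- Adding the edge `xy` to `H` creates a new copy of `F` containing `xy`. -/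
def NewCopyStep {W V : Type*} (F : SimpleGraph W) (H : SimpleGraph V) (x y : V) : Prop :=
  ¬ H.Adj x y ∧
  ∃ f : W ↪ V, ∃ a b : W, F.Adj a b ∧ f a = x ∧ f b = y ∧
    ∀ c d, F.Adj c d → (H ⊔ SimpleGraph.fromEdgeSet {s(x, y)}).Adj (f c) (f d)

/-- The list `l` of edges can be added successively to `H`, each addition creating a
new copy of `F` containing the added edge. -/
def SatProcess {W V : Type*} (F : SimpleGraph W) : SimpleGraph V → List (V × V) → Prop
  | _, [] => True
  | H, e :: l => NewCopyStep F H e.1 e.2 ∧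
      SatProcess F (H ⊔ SimpleGraph.fromEdgeSet {s(e.1, e.2)}) l

/-- The graph obtained from `H` by adding all edges in the list `l`. -/
def addEdges {V : Type*} (H : SimpleGraph V) (l : List (V × V)) : SimpleGraph V :=
  H ⊔ SimpleGraph.fromEdgeSet {e | ∃ p ∈ l, e = s(p.1, p.2)}

/-- `H` is weakly `(G, F)`-saturated. -/
def WeaklySaturated {W V : Type*} (G : SimpleGraph V) (F : SimpleGraph W)
    (H : SimpleGraph V) : Prop :=
  H ≤ G ∧ ¬ HasCopy F H ∧ ∃ l : List (V × V), SatProcess F H l ∧ addEdges H l = G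

/-- The weak saturation number `wsat(G, F)`. -/
noncomputable def wsat {W V : Type*} (G : SimpleGraph V) (F : SimpleGraph W) : ℕ :=
  sInf {m | ∃ H, WeaklySaturated G F H ∧ H.edgeSet.ncard = m}


/-! Take a weakly saturated `H` with `wsat G F` edges and `H ≠ G`. The first edge `xy` of its
saturation process completes a copy of `F`, whose other `|E(F)| - 1` edges lie in `H`. Every
vertex `v` has `H`-degree at least `min δ(G) (δ(F) - 1)`: either no edge at `v` is ever added,
or when the first one is, `v` is the image of a vertex of `F` whose other neighbours are
already `H`-neighbours of `v`. The edges at the `|V(G)| - |V(F)|` vertices outside the copy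
avoid the copy, and by the handshake lemma there are at least
`min δ(G) (δ(F) - 1) (|V(G)| - |V(F)|) / 2` of them. -/

section

variable {V W : Type*}

lemma addEdges_nil (H : SimpleGraph V) : addEdges H [] = H := by
  simp [addEdges]

lemma addEdges_cons (H : SimpleGraph V) (e : V × V) (l : List (V × V)) :
    addEdges H (e :: l) = addEdges (H ⊔ fromEdgeSet {s(e.1, e.2)}) l := by
  simp only [addEdges, sup_assoc, ← fromEdgeSet_union]
  congr 2
  ext
  simp [or_and_right, exists_or, eq_comm]

lemma addEdges_append_singleton (H : SimpleGraph V) (l : List (V × V)) (e : V × V) :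
    addEdges H (l ++ [e]) = addEdges H l ⊔ fromEdgeSet {s(e.1, e.2)} := by
  simp only [addEdges, sup_assoc, ← fromEdgeSet_union]
  congr 2
  ext
  simp [or_and_right, exists_or, eq_comm, or_comm]

lemma satProcess_append_singleton (F : SimpleGraph W) (H : SimpleGraph V)
    (l : List (V × V)) (e : V × V) :
    SatProcess F H (l ++ [e]) ↔ SatProcess F H l ∧ NewCopyStep F (addEdges H l) e.1 e.2 := by
  induction l generalizing H with
  | nil => simp [SatProcess, addEdges_nil]
  | cons e' l ih => simp [SatProcess, ih, addEdges_cons, and_assoc]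

namespace SimpleGraph

lemma neighborSet_sup_fromEdgeSet_of_notMem (H : SimpleGraph V) {x y v : V}
    (hv : v ∉ s(x, y)) : (H ⊔ fromEdgeSet {s(x, y)}).neighborSet v = H.neighborSet v := by
  ext u
  simp only [mem_neighborSet, sup_adj, fromEdgeSet_adj, Set.mem_singleton_iff, or_iff_left_iff_imp]
  rintro ⟨h, -⟩
  exact absurd (h ▸ Sym2.mem_mk_left v u) hv

lemma deleteEdges_sup_fromEdgeSet_of_adj {G : SimpleGraph V} {x y : V} (h : G.Adj x y) :
    G.deleteEdges {s(x, y)} ⊔ fromEdgeSet {s(x, y)} = G :=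
  sdiff_sup_cancel ((edge_le_iff G).2 (Or.inr h))

lemma ncard_neighborSet_eq_degree [Fintype V] (H : SimpleGraph V) [DecidableRel H.Adj] (v : V) :
    (H.neighborSet v).ncard = H.degree v := by
  rw [← card_neighborFinset_eq_degree, ← Set.ncard_coe_finset, coe_neighborFinset]

lemma exists_adj_of_one_le_minDegree [Fintype W] {F : SimpleGraph W} [DecidableRel F.Adj]
    (h : 1 ≤ F.minDegree) : ∃ a b, F.Adj a b := by
  cases isEmpty_or_nonempty W
  · simp [minDegree_of_subsingleton] at h
  · obtain ⟨a⟩ : Nonempty W := inferInstance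
    obtain ⟨b, hab⟩ := (F.degree_pos_iff_exists_adj a).1 (h.trans (F.minDegree_le_degree a))
    exact ⟨a, b, hab⟩

lemma mul_card_add_two_mul_card_le_two_mul_card_edgeFinset [Fintype V]
    (H : SimpleGraph V) [DecidableRel H.Adj] {T : Finset V} {S : Finset (Sym2 V)} {d : ℕ}
    (hS : S ⊆ H.edgeFinset) (hST : ∀ e ∈ S, ∀ v ∈ e, v ∉ T) (hd : ∀ v ∈ T, d ≤ H.degree v) :
    d * #T + 2 * #S ≤ 2 * #H.edgeFinset := by
  classical
  set K := H.deleteEdges S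
  have hdegree : ∀ v ∈ T, K.degree v = H.degree v := by
    intro v hv
    simp only [← card_neighborFinset_eq_degree]
    congr 1
    ext u
    simp only [mem_neighborFinset, K, deleteEdges_adj, and_iff_left_iff_imp]
    exact fun _ hvu => hST _ hvu v (Sym2.mem_mk_left v u) hv
  have hedges : #K.edgeFinset + #S = #H.edgeFinset := by
    rw [edgeFinset_deleteEdges, card_sdiff_add_card_eq_card hS]
  calc d * #T + 2 * #S ≤ ∑ v ∈ T, K.degree v + 2 * #S := by
        rw [mul_comm, ← smul_eq_mul, ← sum_const]
        gcongr with v hv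
        exact (hd v hv).trans (hdegree v hv).ge
    _ ≤ ∑ v, K.degree v + 2 * #S := by gcongr; exact subset_univ T
    _ = 2 * #H.edgeFinset := by rw [sum_degrees_eq_twice_card_edges, ← hedges, mul_add]

end SimpleGraph

section NewCopyStep

variable {F : SimpleGraph W} {H : SimpleGraph V} {x y : V}

lemma NewCopyStep.symm (h : NewCopyStep F H x y) : NewCopyStep F H y x := by
  obtain ⟨hxy, f, a, b, hab, rfl, rfl, hf⟩ := h
  exact ⟨fun h => hxy h.symm, f, b, a, hab.symm, rfl, rfl, by simpa only [Sym2.eq_swap] using hf⟩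

lemma NewCopyStep.minDegree_sub_one_le [Finite V] [Fintype W] [DecidableRel F.Adj]
    (h : NewCopyStep F H x y) : F.minDegree - 1 ≤ (H.neighborSet x).ncard := by
  classical
  obtain ⟨-, f, a, b, hab, rfl, rfl, hf⟩ := h
  have hmaps : ∀ d ∈ (F.neighborFinset a).erase b, f d ∈ H.neighborSet (f a) := by
    intro d hd
    rw [mem_erase, mem_neighborFinset] at hd
    refine (hf a d hd.2).resolve_right ?_
    rintro ⟨hd', -⟩
    exact hd.1 (f.injective (Sym2.congr_right.mp hd'))
  calc F.minDegree - 1 ≤ F.degree a - 1 := Nat.sub_le_sub_right (F.minDegree_le_degree a) 1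
    _ = #((F.neighborFinset a).erase b) := by
        rw [card_erase_of_mem ((F.mem_neighborFinset a b).2 hab), card_neighborFinset_eq_degree]
    _ = #(((F.neighborFinset a).erase b).map f) := (card_map _).symm
    _ ≤ (H.neighborSet (f a)).ncard := by
        rw [← Set.ncard_coe_finset]
        refine Set.ncard_le_ncard ?_
        intro z hz
        obtain ⟨d, hd, rfl⟩ := Finset.mem_map.1 (mem_coe.1 hz)
        exact hmaps d hd

lemma NewCopyStep.exists_embedding_edges_subset [Fintype V] [DecidableRel H.Adj] [Fintype W]
    [DecidableRel F.Adj] (h : NewCopyStep F H x y) :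
    ∃ f : W ↪ V, ∃ S ⊆ H.edgeFinset, #S + 1 = #F.edgeFinset ∧
      ∀ e ∈ S, ∀ v ∈ e, v ∈ Set.range f := by
  classical
  obtain ⟨-, f, a, b, hab, rfl, rfl, hf⟩ := h
  refine ⟨f, (F.edgeFinset.erase s(a, b)).map f.sym2Map, ?_, ?_, ?_⟩
  · intro e he
    simp only [Finset.mem_map, mem_erase, mem_edgeFinset] at he
    obtain ⟨e, ⟨hne, he⟩, rfl⟩ := he
    induction e using Sym2.ind with
    | _ c d =>
      rw [Function.Embedding.sym2Map_apply, Sym2.map_mk, mem_edgeFinset, mem_edgeSet]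
      refine (hf c d he).resolve_right ?_
      rintro ⟨hcd, -⟩
      exact hne (f.sym2Map.injective hcd)
  · rw [card_map, card_erase_add_one ((F.mem_edgeFinset).2 hab)]
  · intro e he v hv
    simp only [Finset.mem_map] at he
    obtain ⟨e, -, rfl⟩ := he
    induction e using Sym2.ind with
    | _ c d => rcases Sym2.mem_iff.1 hv with rfl | rfl <;> simp

end NewCopyStep

lemma SatProcess.minDegree_sub_one_le [Finite V] [Fintype W] {F : SimpleGraph W}
    [DecidableRel F.Adj] {l : List (V × V)} {H : SimpleGraph V} {v u : V}
    (hl : SatProcess F H l) (hadj : (addEdges H l).Adj v u) (hnadj : ¬ H.Adj v u) :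
    F.minDegree - 1 ≤ (H.neighborSet v).ncard := by
  induction l generalizing H with
  | nil => rw [addEdges_nil] at hadj; exact absurd hadj hnadj
  | cons e l ih =>
    obtain ⟨hstep, hl⟩ := hl
    by_cases hv : v ∈ s(e.1, e.2)
    · rcases Sym2.mem_iff.1 hv with rfl | rfl
      · exact hstep.minDegree_sub_one_le
      · exact hstep.symm.minDegree_sub_one_le
    · have hnbr := H.neighborSet_sup_fromEdgeSet_of_notMem hv
      rw [← hnbr]
      refine ih hl (by rwa [← addEdges_cons]) ?_
      rwa [← mem_neighborSet, hnbr]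

lemma exists_weaklySaturated [Finite V] {F : SimpleGraph W} (G : SimpleGraph V)
    (hF : ∃ a b, F.Adj a b) : ∃ H, WeaklySaturated G F H := by
  obtain ⟨a, b, hab⟩ := hF
  induction hn : G.edgeSet.ncard using Nat.strong_induction_on generalizing G with
  | _ n ih =>
    by_cases hcopy : HasCopy F G
    · obtain ⟨f, hf⟩ := hcopy
      have hG := deleteEdges_sup_fromEdgeSet_of_adj (hf a b hab)
      have hlt : (G.deleteEdges {s(f a, f b)}).edgeSet.ncard < n := by
        rw [← hn, edgeSet_deleteEdges]
        exact Set.ncard_sdiff_singleton_lt_of_mem (hf a b hab) (Set.toFinite _)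
      obtain ⟨H, hHG, hH, l, hl, hadd⟩ := ih _ hlt _ rfl
      refine ⟨H, hHG.trans (deleteEdges_le _), hH, l ++ [(f a, f b)], ?_, ?_⟩
      · rw [satProcess_append_singleton, hadd]
        refine ⟨hl, by simp, f, a, b, hab, rfl, rfl, fun c d hcd => ?_⟩
        rw [hG]
        exact hf c d hcd
      · rw [addEdges_append_singleton, hadd, hG]
    · exact ⟨G, le_rfl, hcopy, [], trivial, addEdges_nil G⟩

lemma exists_weaklySaturated_ncard_eq_wsat [Finite V] {F : SimpleGraph W} (G : SimpleGraph V)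
    (hF : ∃ a b, F.Adj a b) : ∃ H, WeaklySaturated G F H ∧ H.edgeSet.ncard = wsat G F := by
  obtain ⟨H, hH⟩ := exists_weaklySaturated G hF
  exact Nat.sInf_mem (s := {m | ∃ H, WeaklySaturated G F H ∧ H.edgeSet.ncard = m}) ⟨_, H, hH, rfl⟩

section WeaklySaturated

variable {F : SimpleGraph W} {G H : SimpleGraph V}

lemma WeaklySaturated.exists_newCopyStep (h : WeaklySaturated G F H) (hne : H ≠ G) :
    ∃ x y, NewCopyStep F H x y := by
  obtain ⟨-, -, _ | ⟨e, l⟩, hl, hadd⟩ := h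
  · exact absurd ((addEdges_nil H).symm.trans hadd) hne
  · exact ⟨e.1, e.2, hl.1⟩

lemma WeaklySaturated.min_minDegree_le_degree [Fintype V] [Fintype W] [DecidableRel G.Adj]
    [DecidableRel H.Adj] [DecidableRel F.Adj] (h : WeaklySaturated G F H) (v : V) :
    min G.minDegree (F.minDegree - 1) ≤ H.degree v := by
  obtain ⟨-, -, l, hl, hadd⟩ := h
  by_cases hfull : ∀ u, G.Adj v u → H.Adj v u
  · refine (min_le_left _ _).trans ((G.minDegree_le_degree v).trans ?_)
    simp only [← card_neighborFinset_eq_degree]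
    exact card_le_card fun u hu => by simpa using hfull u (by simpa using hu)
  · push Not at hfull
    obtain ⟨u, hG, hH⟩ := hfull
    rw [← ncard_neighborSet_eq_degree]
    exact (min_le_right _ _).trans (hl.minDegree_sub_one_le (hadd ▸ hG) hH)

end WeaklySaturated

end

theorem stmt0_general {V W : Type*} [Fintype V] [Fintype W]
    (G : SimpleGraph V) (F : SimpleGraph W)
    [DecidableRel G.Adj] [DecidableRel F.Adj]
    (hδF : 1 ≤ F.minDegree) :
    min ((G.edgeSet.ncard : ℝ))
      ((F.edgeSet.ncard : ℝ) - 1 +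
        (min G.minDegree (F.minDegree - 1) : ℕ) *
          ((Fintype.card V : ℝ) - Fintype.card W) / 2)
      ≤ (wsat G F : ℝ) := by
  classical
  obtain ⟨H, hsat, hH⟩ :=
    exists_weaklySaturated_ncard_eq_wsat G (exists_adj_of_one_le_minDegree hδF)
  rw [← hH]
  by_cases hHG : H = G
  · subst hHG
    exact min_le_left _ _
  obtain ⟨x, y, hstep⟩ := hsat.exists_newCopyStep hHG
  obtain ⟨f, S, hSH, hSF, hSf⟩ := hstep.exists_embedding_edges_subset
  have hcount := H.mul_card_add_two_mul_card_le_two_mul_card_edgeFinset (T := (univ.map f)ᶜ)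
    hSH (fun e he v hv hvT => by
      obtain ⟨w, rfl⟩ := hSf e he v hv
      exact mem_compl.1 hvT (mem_map_of_mem _ (mem_univ w)))
    (fun v _ => hsat.min_minDegree_le_degree v)
  rw [card_compl, card_map, card_univ] at hcount
  have hcount' := (Nat.cast_le (α := ℝ)).2 hcount
  push_cast [Nat.cast_sub (Fintype.card_le_of_embedding f)] at hcount'
  simp only [← coe_edgeFinset, Set.ncard_coe_finset, ← hSF]
  push_cast
  refine (min_le_right _ _).trans ?_
  linarith

/-- for graphs `G`, `F` with `δ(F) ≥ 1` and `|V(G)| ≥ |V(F)|`,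
`wsat(G,F) ≥ min{|E(G)|, |E(F)| - 1 + min{δ(G), δ(F)-1}·(|V(G)|-|V(F)|)/2}`. -/
theorem stmt0 {V W : Type*} [Fintype V] [Fintype W]
    (G : SimpleGraph V) (F : SimpleGraph W)
    [DecidableRel G.Adj] [DecidableRel F.Adj]
    (hδF : 1 ≤ F.minDegree) (hcard : Fintype.card W ≤ Fintype.card V) :
    min ((G.edgeSet.ncard : ℝ))
      ((F.edgeSet.ncard : ℝ) - 1 +
        (min G.minDegree (F.minDegree - 1) : ℕ) *
          ((Fintype.card V : ℝ) - Fintype.card W) / 2)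
      ≤ (wsat G F : ℝ) :=
  stmt0_general G F hδF
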